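/- Let S be an inverse semigroup with zero. There is a bijection between the set of proper filters of S that contain an idempotent and the set of proper filters of the meet semilattice E(S) of idempotents, given by A ↦ A ∩ E(S) with inverse F ↦ F↑ (upward closure in S). Moreover, this bijection restricts to a bijection between idempotent ultrafilters of S and ultrafilters of E(S). -/

import Mathlib

/-- An inverse semigroup with zero: associative multiplication, unique
generalized inverses, and a multiplicatively absorbing zero. -/
structure InvSemigroupZero (S : Type*) [Mul S] [Inv S] [Zero S] : Prop where
  mul_assoc : ∀ a b c : S, a * b * c = a * (b * c)
  mul_inv_mul : ∀ a : S, a * a⁻¹ * a = a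
  inv_mul_inv : ∀ a : S, a⁻¹ * a * a⁻¹ = a⁻¹
  inv_unique : ∀ a t : S, a * t * a = a → t * a * t = t → t = a⁻¹
  zero_mul : ∀ a : S, 0 * a = 0
  mul_zero : ∀ a : S, a * 0 = 0

def IsIdem {S : Type*} [Mul S] (e : S) : Prop := e * e = e

/-- The natural partial order: `s ≤ t` iff `s = t e` for some idempotent `e`. -/
def natLe {S : Type*} [Mul S] (s t : S) : Prop := ∃ e : S, IsIdem e ∧ s = t * e

/-- `s` and `t` are compatible iff `s⁻¹ t` and `s t⁻¹` are idempotents. -/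
def Compat {S : Type*} [Mul S] [Inv S] (s t : S) : Prop :=
  IsIdem (s⁻¹ * t) ∧ IsIdem (s * t⁻¹)

/-- Upward closure of a subset in the natural partial order. -/
def upc {S : Type*} [Mul S] (X : Set S) : Set S := {s | ∃ x ∈ X, natLe x s}

/-- A filter: nonempty, upward closed and downward directed. -/
def IsFilt {S : Type*} [Mul S] (A : Set S) : Prop :=
  A.Nonempty ∧ (∀ a ∈ A, ∀ s, natLe a s → s ∈ A) ∧
    ∀ a ∈ A, ∀ b ∈ A, ∃ c ∈ A, natLe c a ∧ natLe c b

/-- A proper filter: a filter not containing `0`. -/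
def IsPFilt {S : Type*} [Mul S] [Zero S] (A : Set S) : Prop := IsFilt A ∧ (0 : S) ∉ A

def dF {S : Type*} [Mul S] [Inv S] (A : Set S) : Set S :=
  upc {p | ∃ a ∈ A, ∃ b ∈ A, p = a⁻¹ * b}

def rF {S : Type*} [Mul S] [Inv S] (A : Set S) : Set S :=
  upc {p | ∃ a ∈ A, ∃ b ∈ A, p = a * b⁻¹}

def invF {S : Type*} [Inv S] (A : Set S) : Set S := Inv.inv '' A

def mulF {S : Type*} [Mul S] (A B : Set S) : Set S :=
  upc {p | ∃ a ∈ A, ∃ b ∈ B, p = a * b}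

/-- An ultrafilter: a maximal proper filter. -/
def IsUltraF {S : Type*} [Mul S] [Zero S] (A : Set S) : Prop :=
  IsPFilt A ∧ ∀ B : Set S, IsPFilt B → A ⊆ B → A = B

/-- A proper filter of the meet semilattice `E(S)` of idempotents: a nonempty
set of idempotents, upward closed among idempotents, closed under meets
(= products of idempotents), not containing `0`. -/
def EFilt {S : Type*} [Mul S] [Zero S] (F : Set S) : Prop :=
  (∀ e ∈ F, IsIdem e) ∧ F.Nonempty ∧
    (∀ e ∈ F, ∀ f : S, IsIdem f → natLe e f → f ∈ F) ∧
    (∀ e ∈ F, ∀ f ∈ F, e * f ∈ F) ∧ (0 : S) ∉ F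

/-- An ultrafilter of `E(S)`. -/
def EUltra {S : Type*} [Mul S] [Zero S] (F : Set S) : Prop :=
  EFilt F ∧ ∀ F' : Set S, EFilt F' → F ⊆ F' → F = F'

/-- A proper filter of `S` containing an idempotent. -/
def IdemPFilt {S : Type*} [Mul S] [Zero S] (A : Set S) : Prop :=
  IsPFilt A ∧ ∃ e ∈ A, IsIdem e

/-! Idempotents of an inverse semigroup commute: for idempotents `e, f` the element `f (ef)⁻¹ e`
is again an inverse of `ef`, so `(ef)⁻¹` and hence `ef` is idempotent, and then `fe` is an inverse
of `ef`. With this, `x ≤ a` and `y ≤ b` for idempotents `x, y` give `xy ≤ a` and `xy ≤ b`, so the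
upward closure of a filter of `E(S)` is directed; and a filter containing an idempotent `e` is
generated by its idempotents, because each of its members has a common lower bound with `e`,
which is idempotent. The two maps are monotone and mutually inverse, so they match maximal
elements. -/

namespace InvSemigroupZero

variable {S : Type*} [Mul S] [Inv S] [Zero S]

theorem mul_inv_mul' (hS : InvSemigroupZero S) (a : S) : a * (a⁻¹ * a) = a := by
  rw [← hS.mul_assoc, hS.mul_inv_mul]

theorem inv_inv (hS : InvSemigroupZero S) (a : S) : a⁻¹⁻¹ = a :=
  (hS.inv_unique a⁻¹ a (hS.inv_mul_inv a) (hS.mul_inv_mul a)).symm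

theorem inv_eq_self_of_isIdem (hS : InvSemigroupZero S) {e : S} (he : IsIdem e) : e⁻¹ = e :=
  (hS.inv_unique e e (by rw [he, he]) (by rw [he, he])).symm

theorem isIdem_inv_mul (hS : InvSemigroupZero S) (a : S) : IsIdem (a⁻¹ * a) := by
  rw [IsIdem, hS.mul_assoc, hS.mul_inv_mul']

theorem mul_mul_of_isIdem (hS : InvSemigroupZero S) {e : S} (he : IsIdem e) (t : S) :
    e * (e * t) = e * t := by
  rw [← hS.mul_assoc, he]

theorem isIdem_mul (hS : InvSemigroupZero S) {e f : S} (he : IsIdem e) (hf : IsIdem f) :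
    IsIdem (e * f) := by
  set x := (e * f)⁻¹
  have hee := hS.mul_mul_of_isIdem he
  have hff := hS.mul_mul_of_isIdem hf
  have hefx : e * (f * (x * (e * f))) = e * f := by
    simpa only [hS.mul_assoc] using hS.mul_inv_mul (e * f)
  have hxef : ∀ t, x * (e * (f * (x * t))) = x * t := fun t => by
    simpa only [hS.mul_assoc] using congrArg (· * t) (hS.inv_mul_inv (e * f))
  have hfxe : f * x * e = x := hS.inv_unique (e * f) (f * x * e)
    (by simp only [hS.mul_assoc, hee, hff, hefx]) (by simp only [hS.mul_assoc, hee, hff, hxef])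
  have hx : IsIdem x := by
    rw [IsIdem, ← hfxe]
    simp only [hS.mul_assoc, hxef]
  rw [← hS.inv_inv (e * f)]
  rwa [hS.inv_eq_self_of_isIdem hx]

theorem mul_comm_of_isIdem (hS : InvSemigroupZero S) {e f : S} (he : IsIdem e) (hf : IsIdem f) :
    e * f = f * e := by
  have hee := hS.mul_mul_of_isIdem he
  have hff := hS.mul_mul_of_isIdem hf
  have hef : e * (f * (e * f)) = e * f := by
    rw [← hS.mul_assoc]; exact hS.isIdem_mul he hf
  have hfe : f * (e * (f * e)) = f * e := by
    rw [← hS.mul_assoc]; exact hS.isIdem_mul hf he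
  have h := hS.inv_unique (e * f) (f * e)
    (by simp only [hS.mul_assoc, hee, hff, hef]) (by simp only [hS.mul_assoc, hee, hff, hfe])
  rw [h, hS.inv_eq_self_of_isIdem (hS.isIdem_mul he hf)]

theorem natLe_refl (hS : InvSemigroupZero S) (s : S) : natLe s s :=
  ⟨s⁻¹ * s, hS.isIdem_inv_mul s, (hS.mul_inv_mul' s).symm⟩

theorem subset_upc (hS : InvSemigroupZero S) {X : Set S} : X ⊆ upc X :=
  fun x hx => ⟨x, hx, hS.natLe_refl x⟩

theorem natLe_trans (hS : InvSemigroupZero S) {s t u : S} (hst : natLe s t) (htu : natLe t u) :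
    natLe s u := by
  obtain ⟨e, he, rfl⟩ := hst
  obtain ⟨f, hf, rfl⟩ := htu
  exact ⟨f * e, hS.isIdem_mul hf he, hS.mul_assoc u f e⟩

theorem isIdem_of_natLe (hS : InvSemigroupZero S) {s e : S} (he : IsIdem e) (h : natLe s e) :
    IsIdem s := by
  obtain ⟨g, hg, rfl⟩ := h
  exact hS.isIdem_mul he hg

theorem eq_zero_of_natLe_zero (hS : InvSemigroupZero S) {s : S} (h : natLe s 0) : s = 0 := by
  obtain ⟨g, -, rfl⟩ := h
  exact hS.zero_mul g

theorem natLe_mul_of_natLe_of_natLe (hS : InvSemigroupZero S) {c x y : S} (hx : IsIdem x)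
    (hcx : natLe c x) (hcy : natLe c y) : natLe c (x * y) := by
  obtain ⟨g, -, hc⟩ := hcx
  obtain ⟨h, hh, rfl⟩ := hcy
  refine ⟨h, hh, ?_⟩
  rw [hS.mul_assoc, hc, ← hS.mul_assoc, hx, ← hc]

theorem mul_natLe_of_left (hS : InvSemigroupZero S) {x y a : S} (hy : IsIdem y)
    (h : natLe x a) : natLe (x * y) a := by
  obtain ⟨g, hg, rfl⟩ := h
  exact ⟨g * y, hS.isIdem_mul hg hy, hS.mul_assoc a g y⟩

theorem mul_natLe_of_right (hS : InvSemigroupZero S) {x y b : S} (hx : IsIdem x)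
    (hy : IsIdem y) (h : natLe y b) : natLe (x * y) b := by
  rw [hS.mul_comm_of_isIdem hx hy]
  exact hS.mul_natLe_of_left hx h

end InvSemigroupZero

theorem upc_mono {S : Type*} [Mul S] {X Y : Set S} (h : X ⊆ Y) : upc X ⊆ upc Y := by
  rintro s ⟨x, hx, hxs⟩
  exact ⟨x, h hx, hxs⟩

section

variable {S : Type*} [Mul S] [Inv S] [Zero S]

theorem IdemPFilt.eFilt_inter (hS : InvSemigroupZero S) {A : Set S} (hA : IdemPFilt A) :
    EFilt (A ∩ {e | IsIdem e}) := by
  obtain ⟨⟨⟨-, hup, hdir⟩, h0⟩, e, heA, he⟩ := hA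
  refine ⟨fun x hx => hx.2, ⟨e, heA, he⟩, fun x hx f hf hxf => ⟨hup x hx.1 f hxf, hf⟩, ?_,
    fun h => h0 h.1⟩
  intro x hx y hy
  obtain ⟨c, hcA, hcx, hcy⟩ := hdir x hx.1 y hy.1
  exact ⟨hup c hcA _ (hS.natLe_mul_of_natLe_of_natLe hx.2 hcx hcy), hS.isIdem_mul hx.2 hy.2⟩

theorem IdemPFilt.upc_inter (hS : InvSemigroupZero S) {A : Set S} (hA : IdemPFilt A) :
    upc (A ∩ {e | IsIdem e}) = A := by
  obtain ⟨⟨⟨-, hup, hdir⟩, -⟩, e, heA, he⟩ := hA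
  ext s
  constructor
  · rintro ⟨x, hx, hxs⟩
    exact hup x hx.1 s hxs
  · intro hs
    obtain ⟨c, hcA, hce, hcs⟩ := hdir e heA s hs
    exact ⟨c, ⟨hcA, hS.isIdem_of_natLe he hce⟩, hcs⟩

theorem EFilt.idemPFilt_upc (hS : InvSemigroupZero S) {F : Set S} (hF : EFilt F) :
    IdemPFilt (upc F) := by
  obtain ⟨hidem, ⟨e, heF⟩, -, hmeet, h0⟩ := hF
  refine ⟨⟨⟨⟨e, hS.subset_upc heF⟩, ?_, ?_⟩, ?_⟩, e, hS.subset_upc heF, hidem e heF⟩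
  · rintro a ⟨x, hx, hxa⟩ s has
    exact ⟨x, hx, hS.natLe_trans hxa has⟩
  · rintro a ⟨x, hx, hxa⟩ b ⟨y, hy, hyb⟩
    exact ⟨x * y, hS.subset_upc (hmeet x hx y hy), hS.mul_natLe_of_left (hidem y hy) hxa,
      hS.mul_natLe_of_right (hidem x hx) (hidem y hy) hyb⟩
  · rintro ⟨x, hx, hx0⟩
    exact h0 (hS.eq_zero_of_natLe_zero hx0 ▸ hx)

theorem EFilt.upc_inter (hS : InvSemigroupZero S) {F : Set S} (hF : EFilt F) :
    upc F ∩ {e | IsIdem e} = F :=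
  Set.Subset.antisymm (fun _ ⟨⟨x, hx, hxs⟩, hs⟩ => hF.2.2.1 x hx _ hs hxs)
    (fun _ hs => ⟨hS.subset_upc hs, hF.1 _ hs⟩)

theorem IdemPFilt.isUltraF_iff (hS : InvSemigroupZero S) {A : Set S} (hA : IdemPFilt A) :
    IsUltraF A ↔ EUltra (A ∩ {e | IsIdem e}) := by
  constructor
  · rintro ⟨-, hmax⟩
    refine ⟨hA.eFilt_inter hS, fun F hF hAF => ?_⟩
    have hA_upc : A ⊆ upc F := hA.upc_inter hS ▸ upc_mono hAF
    rw [hmax (upc F) (hF.idemPFilt_upc hS).1 hA_upc, hF.upc_inter hS]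
  · rintro ⟨-, hmax⟩
    refine ⟨hA.1, fun B hB hAB => ?_⟩
    obtain ⟨e, heA, he⟩ := hA.2
    have hB' : IdemPFilt B := ⟨hB, e, hAB heA, he⟩
    have h := hmax _ (hB'.eFilt_inter hS) (Set.inter_subset_inter_left _ hAB)
    rw [← hA.upc_inter hS, h, hB'.upc_inter hS]

end

/-- The maps `A ↦ A ∩ E(S)` and `F ↦ F↑` are mutually inverse bijections
between proper filters of `S` containing an idempotent and proper filters of
the meet semilattice `E(S)`; they restrict to a bijection between idempotent
ultrafilters of `S` and ultrafilters of `E(S)`. -/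
theorem idempotent_filters_bijection {S : Type*} [Mul S] [Inv S] [Zero S]
    (hS : InvSemigroupZero S) :
    (∀ A : Set S, IdemPFilt A →
      EFilt (A ∩ {e | IsIdem e}) ∧ upc (A ∩ {e | IsIdem e}) = A) ∧
    (∀ F : Set S, EFilt F → IdemPFilt (upc F) ∧ upc F ∩ {e | IsIdem e} = F) ∧
    (∀ A : Set S, IdemPFilt A → (IsUltraF A ↔ EUltra (A ∩ {e | IsIdem e}))) :=
  ⟨fun _ hA => ⟨hA.eFilt_inter hS, hA.upc_inter hS⟩,
    fun _ hF => ⟨hF.idemPFilt_upc hS, hF.upc_inter hS⟩,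
    fun _ hA => hA.isUltraF_iff hS⟩
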